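/- Let n ≥ 2 and let M_i = N_{n+i-1} denote the i-th n-nacci jar value. Then for every positive integer k and every integer j with 1 ≤ j ≤ n−1, M_{k+j} − ∑_{i=k+1}^{k+j-1} M_i > ∑_{i=1}^{k-1} M_i (the cases j = 1 and j = n−1 recover the two previous n-nacci inequalities). -/
import Mathlib


/-- The n-nacci sequence: `N i = 0` for `i < n - 1`, `N (n-1) = 1`, and each
subsequent term is the sum of the previous `n` terms. -/
def nnacci (n : ℕ) : ℕ → ℕ
  | i =>
    if i < n - 1 then 0
    else if _h : i = n - 1 then 1
    else ∑ j ∈ (Finset.range n).attach, nnacci n (i - n + j.1)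
decreasing_by
  have hj := j.2
  simp only [Finset.mem_range] at hj
  omega

lemma nnacci_zero (n i : ℕ) (h : i < n - 1) : nnacci n i = 0 := by
  rw [nnacci, if_pos h]

lemma nnacci_base (n : ℕ) : nnacci n (n - 1) = 1 := by
  rw [nnacci, if_neg (by omega), dif_pos rfl]

lemma nnacci_rec (n m : ℕ) (hn : 1 ≤ n) (h : n ≤ m) :
    nnacci n m = ∑ t ∈ Finset.range n, nnacci n (m - n + t) := by
  rw [nnacci, if_neg (by omega), dif_neg (by omega)]
  exact Finset.sum_attach (Finset.range n) (fun x => nnacci n (m - n + x))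

lemma nnacci_pos (n : ℕ) (hn : 2 ≤ n) : ∀ m, n - 1 ≤ m → 1 ≤ nnacci n m := by
  intro m
  induction m using Nat.strong_induction_on with
  | _ m ih =>
    intro hm
    rcases eq_or_lt_of_le hm with h | h
    · rw [← h, nnacci_base n]
    · rw [nnacci_rec n m (by omega) (by omega)]
      calc 1 ≤ nnacci n (m - n + (n - 1)) := ih _ (by omega) (by omega)
        _ ≤ _ := Finset.single_le_sum (f := fun t => nnacci n (m - n + t))
            (fun i _ => Nat.zero_le _)
            (Finset.mem_range.mpr (show n - 1 < n by omega))

lemma nnacci_sum_lt (n : ℕ) (hn : 2 ≤ n) : ∀ m, n - 1 ≤ m →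
    ∑ s ∈ Finset.range (m - 1), nnacci n s < nnacci n m := by
  obtain ⟨p, rfl⟩ : ∃ p, n = p + 2 := ⟨n - 2, by omega⟩
  intro m
  induction m using Nat.strong_induction_on with
  | _ m ih =>
    intro hm
    rcases Nat.lt_or_ge m (p + 2) with h | h
    · have hme : m = p + 1 := by omega
      subst hme
      have hz : ∀ s ∈ Finset.range (p + 1 - 1), nnacci (p + 2) s = 0 := by
        intro s hs
        simp only [Finset.mem_range] at hs
        exact nnacci_zero _ s (by omega)
      rw [Finset.sum_eq_zero hz]
      have : nnacci (p + 2) (p + 1) = 1 := nnacci_base (p + 2)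
      omega
    · have hrec := nnacci_rec (p + 2) m (by omega) h
      have hsplit : ∑ s ∈ Finset.range (m - 1), nnacci (p + 2) s
          = ∑ s ∈ Finset.range (m - 2), nnacci (p + 2) s + nnacci (p + 2) (m - 2) := by
        have e : m - 1 = (m - 2) + 1 := by omega
        rw [e, Finset.sum_range_succ]
      have ihm : ∑ s ∈ Finset.range (m - 2), nnacci (p + 2) s < nnacci (p + 2) (m - 1) := by
        have h2 := ih (m - 1) (by omega) (by omega)
        have e : m - 1 - 1 = m - 2 := by omega
        rwa [e] at h2
      have hge : nnacci (p + 2) (m - 1) + nnacci (p + 2) (m - 2) ≤ nnacci (p + 2) m := by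
        rw [hrec, Finset.sum_range_succ, Finset.sum_range_succ]
        have e1 : m - (p + 2) + (p + 1) = m - 1 := by omega
        have e2 : m - (p + 2) + p = m - 2 := by omega
        rw [e1, e2]
        omega
      omega

/-- With jar values `M_i = N_{n+i-1}`, for every `j` with `1 ≤ j ≤ n − 1` one has
`M_{k+j} − ∑_{i=k+1}^{k+j-1} M_i > ∑_{i=1}^{k-1} M_i`. -/
theorem nnacci_general_ineq (n : ℕ) (hn : 2 ≤ n) (k : ℕ) (hk : 0 < k)
    (j : ℕ) (hj1 : 1 ≤ j) (hj2 : j ≤ n - 1) :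
    ∑ i ∈ Finset.Icc 1 (k - 1), nnacci n (n + i - 1) <
      nnacci n (n + (k + j) - 1) -
        ∑ i ∈ Finset.Icc (k + 1) (k + j - 1), nnacci n (n + i - 1) := by
  obtain ⟨q, rfl⟩ : ∃ q, j = q + 1 := ⟨j - 1, by omega⟩
  obtain ⟨l, rfl⟩ : ∃ l, k = l + 1 := ⟨k - 1, by omega⟩
  obtain ⟨p, rfl⟩ : ∃ p, n = q + p + 2 := ⟨n - q - 2, by omega⟩
  rw [lt_tsub_iff_right]
  -- rewrite the first sum as a range sum
  have h1 : ∑ i ∈ Finset.Icc 1 (l + 1 - 1), nnacci (q + p + 2) ((q + p + 2) + i - 1)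
      = ∑ i ∈ Finset.range l, nnacci (q + p + 2) ((q + p + 2) + i) := by
    rw [show l + 1 - 1 = l from rfl, ← Finset.Ico_add_one_right_eq_Icc,
      Finset.sum_Ico_eq_sum_range]
    apply Finset.sum_congr (by congr 1 <;> omega)
    intro i _
    congr 1
    omega
  have h2 : ∑ i ∈ Finset.Icc (l + 1 + 1) (l + 1 + (q + 1) - 1), nnacci (q + p + 2) ((q + p + 2) + i - 1)
      = ∑ i ∈ Finset.range q, nnacci (q + p + 2) ((q + p + 2) + l + 1 + i) := by
    rw [← Finset.Ico_add_one_right_eq_Icc, Finset.sum_Ico_eq_sum_range]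
    apply Finset.sum_congr (by congr 1 <;> omega)
    intro i _
    congr 1
    omega
  have h3 : nnacci (q + p + 2) ((q + p + 2) + (l + 1 + (q + 1)) - 1)
      = ∑ t ∈ Finset.range (q + p + 2), nnacci (q + p + 2) (l + q + 1 + t) := by
    rw [nnacci_rec (q + p + 2) _ (by omega) (by omega)]
    apply Finset.sum_congr rfl
    intro t _
    congr 1
    omega
  rw [h1, h2, h3]
  -- split the big sum: range (q + p + 2) = range (p+2) plus q more terms
  have h4 : ∑ t ∈ Finset.range (q + p + 2), nnacci (q + p + 2) (l + q + 1 + t)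
      = ∑ t ∈ Finset.range (p + 2), nnacci (q + p + 2) (l + q + 1 + t)
        + ∑ i ∈ Finset.range q, nnacci (q + p + 2) ((q + p + 2) + l + 1 + i) := by
    have e : (q + p + 2) = p + 2 + q := by omega
    rw [e, Finset.sum_range_add]
    congr 1
    apply Finset.sum_congr rfl
    intro i _
    congr 1
    omega
  rw [h4]
  apply Nat.add_lt_add_right
  -- key comparison
  have key : ∑ i ∈ Finset.range l, nnacci (q + p + 2) ((q + p + 2) + i)
      ≤ ∑ s ∈ Finset.range ((q + p + 2) + l), nnacci (q + p + 2) s := by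
    have e : ∑ i ∈ Finset.range l, nnacci (q + p + 2) ((q + p + 2) + i)
        = ∑ s ∈ Finset.Ico (q + p + 2) ((q + p + 2) + l), nnacci (q + p + 2) s := by
      rw [Finset.sum_Ico_eq_sum_range]
      apply Finset.sum_congr (by congr 1 <;> omega) (fun i _ => rfl)
    rw [e]
    exact Finset.sum_le_sum_of_subset (by
      intro x hx
      simp only [Finset.mem_Ico] at hx
      exact Finset.mem_range.mpr hx.2)
  have hA : ∑ s ∈ Finset.range ((q + p + 2) + l - 1), nnacci (q + p + 2) s < nnacci (q + p + 2) ((q + p + 2) + l) :=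
    nnacci_sum_lt (q + p + 2) hn ((q + p + 2) + l) (by omega)
  have hsplit : ∑ s ∈ Finset.range ((q + p + 2) + l), nnacci (q + p + 2) s
      = ∑ s ∈ Finset.range ((q + p + 2) + l - 1), nnacci (q + p + 2) s + nnacci (q + p + 2) ((q + p + 2) + l - 1) := by
    have e : (q + p + 2) + l = ((q + p + 2) + l - 1) + 1 := by omega
    conv_lhs => rw [e]
    rw [Finset.sum_range_succ]
  have hR : nnacci (q + p + 2) ((q + p + 2) + l - 1) + nnacci (q + p + 2) ((q + p + 2) + l)
      ≤ ∑ t ∈ Finset.range (p + 2), nnacci (q + p + 2) (l + q + 1 + t) := by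
    rw [Finset.sum_range_succ, Finset.sum_range_succ]
    have e3 : nnacci (q + p + 2) (l + q + 1 + p) = nnacci (q + p + 2) ((q + p + 2) + l - 1) := by
      congr 1 <;> omega
    have e4 : nnacci (q + p + 2) (l + q + 1 + (p + 1)) = nnacci (q + p + 2) ((q + p + 2) + l) := by
      congr 1 <;> omega
    rw [e3, e4]
    omega
  omega
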